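/- arXiv:2004.06788 — 2 statements merged into one kernel-verified Lean document; each statement's English description precedes it below -/
import Mathlib

section
/- Let k ≥ 1 and let X be a k-colorable graph without isolated vertices in which every edge is contained in a clique on k−1 vertices. Then for every vertex v of X the set φ_X(v) = {C ∈ V(B(X)) : v ∈ C} is a vertex of B²(X) = B(B(X)) (that is, it is a color class of some k-coloring of B(X)), and the map φ_X : V(X) → V(B²(X)) is a graph homomorphism from X to B²(X). -/
open SimpleGraph

/-- A `k`-coloring of a graph `X`: a partition of the vertex set into `k`
(possibly empty) independent sets, the color classes of the coloring. -/
def IsColoring {V : Type*} (k : ℕ) (X : SimpleGraph V) (c : Fin k → Set V) : Prop :=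
  (∀ v : V, ∃! i : Fin k, v ∈ c i) ∧
  ∀ i : Fin k, ∀ u ∈ c i, ∀ w ∈ c i, ¬ X.Adj u w

/-- `S` occurs as a color class in some `k`-coloring of `X`. -/
def IsColorClass {V : Type*} (k : ℕ) (X : SimpleGraph V) (S : Set V) : Prop :=
  ∃ c : Fin k → Set V, IsColoring k X c ∧ ∃ i, c i = S

/-- The `k`-coloring complex `B(X)`: vertices are the color classes of
`k`-colorings of `X`, two of them adjacent if they occur together in some
`k`-coloring of `X`. -/
def ColoringComplex {V : Type*} (k : ℕ) (X : SimpleGraph V) :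
    SimpleGraph {S : Set V // IsColorClass k X S} where
  Adj C D := C ≠ D ∧ ∃ c : Fin k → Set V,
    IsColoring k X c ∧ (∃ i, c i = C.1) ∧ (∃ j, c j = D.1)
  symm := by
    constructor
    rintro C D ⟨hne, c, hc, hi, hj⟩
    exact ⟨hne.symm, c, hc, hj, hi⟩
  loopless := by constructor; rintro C ⟨hne, -⟩; exact hne rfl

/-- The canonical map `φ_X`, sending a vertex `v` to the set of all color
classes containing `v`. -/
def phi {V : Type*} (k : ℕ) (X : SimpleGraph V) (v : V) :
    Set {S : Set V // IsColorClass k X S} :=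
  {C | v ∈ C.1}

/-- `X` is reflexive for `k`-colorings: the canonical map `φ_X` is a graph
isomorphism from `X` onto `B²(X) = B(B(X))`. -/
def IsReflexive {V : Type*} (k : ℕ) (X : SimpleGraph V) : Prop :=
  ∃ f : X ≃g ColoringComplex k (ColoringComplex k X),
    ∀ v : V, (f v : {T // IsColorClass k (ColoringComplex k X) T}).1 = phi k X v

/-- `X` is colorful for `k`-colorings: any two distinct vertices lie in
different color classes of some `k`-coloring of `X`. -/
def Colorful {V : Type*} (k : ℕ) (X : SimpleGraph V) : Prop :=
  ∀ x y : V, x ≠ y → ∃ c : Fin k → Set V, IsColoring k X c ∧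
    ∃ i j : Fin k, i ≠ j ∧ x ∈ c i ∧ y ∈ c j

/-! Fix an edge `uw` and a clique `x 0, …, x (k-2)` on `k - 1` vertices containing it. Give a
color class `C` of `X` the color `m` if `x m ∈ C` (there is at most one such `m`, as `C` is
independent) and the color `k - 1` if `C` misses the clique. This is a proper `k`-coloring of
`B(X)`: two classes of one `k`-coloring of `X` are disjoint, and they cannot both miss the clique,
whose vertices already take `k - 1` further colors. Its classes include `φ_X(u)` and `φ_X(w)`, and
these differ because the class of `u` in any `k`-coloring of `X` avoids `w`. -/

section

open Function

variable {V : Type*} {k n : ℕ} {X : SimpleGraph V}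

namespace IsColoring

variable {c : Fin k → Set V} (hc : IsColoring k X c)
include hc

theorem disjoint {i j : Fin k} (hij : i ≠ j) : Disjoint (c i) (c j) :=
  Set.disjoint_left.2 fun _ hi hj => hij ((hc.1 _).unique hi hj)

theorem add_two_le_of_isClique {x : Fin n → V} (hx : Injective x)
    (hclq : X.IsClique (Set.range x)) {i j : Fin k} (hij : i ≠ j)
    (hi : ∀ m, x m ∉ c i) (hj : ∀ m, x m ∉ c j) : n + 2 ≤ k := by
  choose color hcolor using fun v => (hc.1 v).exists
  have hinj : Injective (color ∘ x) := by
    intro a b hab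
    by_contra hne
    refine hc.2 _ (x a) (hcolor (x a)) (x b) ?_ (hclq ⟨a, rfl⟩ ⟨b, rfl⟩ (hx.ne hne))
    rw [show color (x a) = color (x b) from hab]
    exact hcolor (x b)
  have hi' : i ∉ Finset.univ.image (color ∘ x) := by
    simp only [Finset.mem_image, Finset.mem_univ, true_and, not_exists]
    exact fun m h => hi m (h ▸ hcolor (x m))
  have hj' : j ∉ Finset.univ.image (color ∘ x) := by
    simp only [Finset.mem_image, Finset.mem_univ, true_and, not_exists]
    exact fun m h => hj m (h ▸ hcolor (x m))
  calc n + 2 = (insert i (insert j (Finset.univ.image (color ∘ x)))).card := by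
        rw [Finset.card_insert_of_notMem (by simp [hij, hi']), Finset.card_insert_of_notMem hj',
          Finset.card_image_of_injective _ hinj, Finset.card_univ, Fintype.card_fin]
    _ ≤ k := (Finset.card_le_univ _).trans_eq (Fintype.card_fin k)

end IsColoring

theorem IsColorClass.inter_isClique_subsingleton {S t : Set V} (hS : IsColorClass k X S)
    (ht : X.IsClique t) : (S ∩ t).Subsingleton := by
  obtain ⟨c, hc, i, rfl⟩ := hS
  intro u hu w hw
  by_contra hne
  exact hc.2 i u hu.1 w hw.1 (ht hu.2 hw.2 hne)

namespace ColoringComplex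

variable {C D : {S : Set V // IsColorClass k X S}}

theorem disjoint_of_adj (h : (ColoringComplex k X).Adj C D) : Disjoint C.1 D.1 := by
  obtain ⟨hne, c, hc, ⟨i, hi⟩, ⟨j, hj⟩⟩ := h
  rw [← hi, ← hj]
  exact hc.disjoint fun hij => hne (Subtype.ext (by rw [← hi, ← hj, hij]))

theorem exists_mem_of_adj (h : (ColoringComplex k X).Adj C D) {x : Fin n → V}
    (hx : Injective x) (hclq : X.IsClique (Set.range x)) (hk : k ≤ n + 1) :
    (∃ m, x m ∈ C.1) ∨ ∃ m, x m ∈ D.1 := by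
  obtain ⟨hne, c, hc, ⟨i, hi⟩, ⟨j, hj⟩⟩ := h
  by_contra! hmiss
  have hij : i ≠ j := fun hij => hne (Subtype.ext (by rw [← hi, ← hj, hij]))
  have := hc.add_two_le_of_isClique hx hclq hij (hi ▸ hmiss.1) (hj ▸ hmiss.2)
  omega

end ColoringComplex

def cliqueColoring (X : SimpleGraph V) (x : Fin n → V) :
    Fin (n + 1) → Set {S : Set V // IsColorClass (n + 1) X S} :=
  Fin.lastCases {C | ∀ m, x m ∉ C.1} fun m => phi (n + 1) X (x m)

section cliqueColoring

variable {x : Fin n → V} {C : {S : Set V // IsColorClass (n + 1) X S}}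

@[simp]
theorem mem_cliqueColoring_castSucc {m : Fin n} :
    C ∈ cliqueColoring X x m.castSucc ↔ x m ∈ C.1 := by
  simp [cliqueColoring, phi]

@[simp]
theorem mem_cliqueColoring_last : C ∈ cliqueColoring X x (Fin.last n) ↔ ∀ m, x m ∉ C.1 := by
  simp [cliqueColoring]

theorem isColoring_cliqueColoring (hx : Injective x) (hclq : X.IsClique (Set.range x)) :
    IsColoring (n + 1) (ColoringComplex (n + 1) X) (cliqueColoring X x) := by
  refine ⟨fun C => ?_, fun i C hC D hD hCD => ?_⟩
  · by_cases hmeet : ∃ m, x m ∈ C.1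
    · obtain ⟨m, hm⟩ := hmeet
      refine ⟨m.castSucc, by simpa using hm, fun i hi => ?_⟩
      cases i using Fin.lastCases with
      | last => exact absurd hm ((mem_cliqueColoring_last.1 hi) m)
      | cast a =>
        have := C.2.inter_isClique_subsingleton hclq ⟨mem_cliqueColoring_castSucc.1 hi, a, rfl⟩
          ⟨hm, m, rfl⟩
        rw [hx this]
    · push Not at hmeet
      refine ⟨Fin.last n, by simpa using hmeet, fun i hi => ?_⟩
      cases i using Fin.lastCases with
      | last => rfl
      | cast a => exact absurd (mem_cliqueColoring_castSucc.1 hi) (hmeet a)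
  · cases i using Fin.lastCases with
    | last =>
      rcases ColoringComplex.exists_mem_of_adj hCD hx hclq le_rfl with ⟨m, hm⟩ | ⟨m, hm⟩
      · exact mem_cliqueColoring_last.1 hC m hm
      · exact mem_cliqueColoring_last.1 hD m hm
    | cast m =>
      exact Set.disjoint_left.1 (ColoringComplex.disjoint_of_adj hCD)
        (mem_cliqueColoring_castSucc.1 hC) (mem_cliqueColoring_castSucc.1 hD)

end cliqueColoring

theorem exists_isColoring_coloringComplex_phi_of_isClique {s : Finset V}
    (hs : X.IsClique (s : Set V)) :
    ∃ γ, IsColoring (s.card + 1) (ColoringComplex (s.card + 1) X) γ ∧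
      ∀ v ∈ s, ∃ i, γ i = phi (s.card + 1) X v := by
  let x : Fin s.card → V := fun m => s.equivFin.symm m
  have hrange : Set.range x ⊆ s := by
    rintro _ ⟨m, rfl⟩
    exact (s.equivFin.symm m).2
  refine ⟨cliqueColoring X x,
    isColoring_cliqueColoring (Subtype.val_injective.comp s.equivFin.symm.injective)
      (hs.subset hrange), fun v hv => ⟨(s.equivFin ⟨v, hv⟩).castSucc, ?_⟩⟩
  simp [cliqueColoring, x]

theorem phi_ne_of_adj (hcol : ∃ c : Fin k → Set V, IsColoring k X c) {u w : V}
    (huw : X.Adj u w) : phi k X u ≠ phi k X w := by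
  obtain ⟨c, hc⟩ := hcol
  obtain ⟨i, hi, -⟩ := hc.1 u
  intro h
  have hw : (⟨c i, c, hc, i, rfl⟩ : {S : Set V // IsColorClass k X S}) ∈ phi k X w := h ▸ hi
  exact hc.2 i u hi w hw huw

end

theorem phi_is_hom_general {V : Type*} (k : ℕ) (X : SimpleGraph V)
    (hcol : ∃ c : Fin k → Set V, IsColoring k X c)
    (hnoiso : ∀ v : V, ∃ u, X.Adj v u)
    (hedge : ∀ u w : V, X.Adj u w → ∃ s : Finset V,
      s.card = k - 1 ∧ X.IsClique ↑s ∧ u ∈ s ∧ w ∈ s) :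
    (∀ v : V, IsColorClass k (ColoringComplex k X) (phi k X v)) ∧
    ∃ f : X →g ColoringComplex k (ColoringComplex k X),
      ∀ v : V, (f v : {T // IsColorClass k (ColoringComplex k X) T}).1 = phi k X v := by
  have hedge_classes : ∀ u w, X.Adj u w → ∃ γ, IsColoring k (ColoringComplex k X) γ ∧
      (∃ i, γ i = phi k X u) ∧ ∃ j, γ j = phi k X w := by
    intro u w huw
    obtain ⟨s, hcard, hs, hu, hw⟩ := hedge u w huw
    obtain rfl : k = s.card + 1 := by
      have := Finset.card_pos.2 ⟨u, hu⟩
      omega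
    obtain ⟨γ, hγ, hphi⟩ := exists_isColoring_coloringComplex_phi_of_isClique hs
    exact ⟨γ, hγ, hphi u hu, hphi w hw⟩
  have hclass : ∀ v, IsColorClass k (ColoringComplex k X) (phi k X v) := fun v =>
    have ⟨u, hvu⟩ := hnoiso v
    have ⟨γ, hγ, hv, _⟩ := hedge_classes v u hvu
    ⟨γ, hγ, hv⟩
  refine ⟨hclass, ⟨fun v => ⟨phi k X v, hclass v⟩, fun {u w} huw => ?_⟩, fun _ => rfl⟩
  obtain ⟨γ, hγ, hu, hw⟩ := hedge_classes u w huw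
  exact ⟨fun h => phi_ne_of_adj hcol huw (congrArg Subtype.val h), γ, hγ, hu, hw⟩

/-- If `X` is a `k`-colorable graph without isolated vertices in which every
edge lies in a clique on `k - 1` vertices, then `φ_X(v)` is a vertex of
`B²(X)` for every vertex `v`, and `φ_X` is a graph homomorphism `X → B²(X)`. -/
theorem phi_is_hom {V : Type*} (k : ℕ) (hk : 1 ≤ k) (X : SimpleGraph V)
    (hcol : ∃ c : Fin k → Set V, IsColoring k X c)
    (hnoiso : ∀ v : V, ∃ u, X.Adj v u)
    (hedge : ∀ u w : V, X.Adj u w → ∃ s : Finset V,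
      s.card = k - 1 ∧ X.IsClique ↑s ∧ u ∈ s ∧ w ∈ s) :
    (∀ v : V, IsColorClass k (ColoringComplex k X) (phi k X v)) ∧
    ∃ f : X →g ColoringComplex k (ColoringComplex k X),
      ∀ v : V, (f v : {T // IsColorClass k (ColoringComplex k X) T}).1 = phi k X v :=
  phi_is_hom_general k X hcol hnoiso hedge
end

section
/- Let F be a graph admitting a 3-coloring with color classes A, B and C. Suppose that F has no isolated vertices, that every edge of F is contained in exactly one triangle, and that the induced subgraph F[B ∪ C] is connected. If {A₁, A₂, A₃} and {A₁′, A₂′, A₃′} are 3-colorings of F such that Aᵢ ∩ A = Aᵢ′ ∩ A for i = 1, 2, 3, and A meets at least two of the classes A₁, A₂, A₃, then Aᵢ = Aᵢ′ for i = 1, 2, 3; that is, any 3-coloring of F that uses at least two colors on A is determined by its restriction to A. -/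
open SimpleGraph

/-!
View the colorings `c, c'` as maps `f, f' : V → Fin 3`; they agree on `A`. Every edge `uw` of
`F[B ∪ C]` lies in a triangle whose apex `a` must be in `A`, so `f a = f' a`. As the triangle
carries all three colors under both colorings, `f` and `f'` agree at `u` iff they agree at `w`,
and if they disagree at `u` then `f a` is the third color `-(f u + f' u)`. By connectivity of
`F[B ∪ C]`, either `f = f'` on `B ∪ C`, hence everywhere, or they disagree everywhere on `B ∪ C`
and `-(f v + f' v)` is a constant `m` there. In the latter case every `a ∈ A` has a neighbor in
`B ∪ C`, which forces `f a = m`, so `A` meets only one color class of `c`.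
-/

theorem fin_three_eq_of_pairwise_ne {x y z i : Fin 3} (hxy : x ≠ y) (hxz : x ≠ z) (hyz : y ≠ z)
    (hx : x ≠ i) (hy : y ≠ i) : z = i := by
  revert x y z i; decide

-- The three elements of `Fin 3` sum to `0`.
theorem fin_three_neg_add_eq {x y z : Fin 3} (hxy : x ≠ y) (hxz : x ≠ z) (hyz : y ≠ z) :
    -(x + y) = z := by
  revert x y z; decide

theorem fin_three_eq_iff_eq {x y z x' y' : Fin 3} (hxy : x ≠ y) (hxz : x ≠ z) (hyz : y ≠ z)
    (hxy' : x' ≠ y') (hxz' : x' ≠ z) (hyz' : y' ≠ z) : x = x' ↔ y = y' := by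
  revert x y z x' y'; decide

theorem SimpleGraph.Preconnected.apply_eq_of_forall_adj {V β : Type*} {G : SimpleGraph V}
    (hG : G.Preconnected) {g : V → β} (h : ∀ u w, G.Adj u w → g u = g w) (u w : V) :
    g u = g w := by
  obtain ⟨p⟩ := hG u w
  induction p with
  | nil => rfl
  | cons hadj _ ih => exact (h _ _ hadj).trans ih

namespace IsColoring

variable {V : Type*} {k : ℕ} {X : SimpleGraph V} {c : Fin k → Set V}

noncomputable def toColoring (hc : IsColoring k X c) : X.Coloring (Fin k) :=
  Coloring.mk (fun v => (hc.1 v).exists.choose) fun {u w} huw he =>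
    hc.2 _ u (hc.1 u).exists.choose_spec w (he ▸ (hc.1 w).exists.choose_spec) huw

theorem mem_iff (hc : IsColoring k X c) {v : V} {i : Fin k} : v ∈ c i ↔ hc.toColoring v = i :=
  ⟨fun h => ((hc.1 v).unique h (hc.1 v).exists.choose_spec).symm,
    fun h => h ▸ (hc.1 v).exists.choose_spec⟩

theorem eq_of_toColoring_eq {c' : Fin k → Set V} (hc : IsColoring k X c)
    (hc' : IsColoring k X c') (h : hc.toColoring = hc'.toColoring) : c = c' :=
  funext fun _ => Set.ext fun _ => by rw [hc.mem_iff, hc'.mem_iff, h]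

theorem mem_of_adj_of_adj {c : Fin 3 → Set V} (hc : IsColoring 3 X c) {i : Fin 3} {u w x : V}
    (hu : u ∉ c i) (hw : w ∉ c i) (huw : X.Adj u w) (hux : X.Adj u x) (hwx : X.Adj w x) :
    x ∈ c i := by
  rw [hc.mem_iff] at hu hw ⊢
  exact fin_three_eq_of_pairwise_ne (hc.toColoring.valid huw) (hc.toColoring.valid hux)
    (hc.toColoring.valid hwx) hu hw

theorem union_eq_compl {A B C : Set V} (h : IsColoring 3 X ![A, B, C]) : B ∪ C = Aᶜ := by
  ext v
  have hA : v ∈ A ↔ h.toColoring v = 0 := h.mem_iff (i := 0)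
  have hB : v ∈ B ↔ h.toColoring v = 1 := h.mem_iff (i := 1)
  have hC : v ∈ C ↔ h.toColoring v = 2 := h.mem_iff (i := 2)
  rw [Set.mem_union, Set.mem_compl_iff, hA, hB, hC]
  generalize h.toColoring v = x
  revert x; decide

end IsColoring

namespace SimpleGraph.Coloring

variable {V : Type*} {F : SimpleGraph V} {A : Set V} (f f' : F.Coloring (Fin 3))

theorem eq_iff_eq_of_adj_of_adj {u w a : V} (huw : F.Adj u w) (hua : F.Adj u a) (hwa : F.Adj w a)
    (ha : f a = f' a) : f u = f' u ↔ f w = f' w :=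
  fin_three_eq_iff_eq (f.valid huw) (f.valid hua) (f.valid hwa) (f'.valid huw)
    (ha ▸ f'.valid hua) (ha ▸ f'.valid hwa)

theorem neg_add_eq_of_adj {u a : V} (hua : F.Adj u a) (ha : f a = f' a) (hu : f u ≠ f' u) :
    -(f u + f' u) = f a :=
  fin_three_neg_add_eq hu (f.valid hua) (ha ▸ f'.valid hua)

variable {f f'}
variable (hapex : ∀ u w, u ∉ A → w ∉ A → F.Adj u w → ∃ a ∈ A, F.Adj u a ∧ F.Adj w a)
  (hconn : (F.induce Aᶜ).Connected) (hA : Set.EqOn f f' A)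
include hapex hconn hA

theorem eqOn_compl_or_forall_ne : Set.EqOn f f' Aᶜ ∨ ∀ v ∉ A, f v ≠ f' v := by
  have hinv : ∀ x y : ↥Aᶜ, (f x = f' x) = (f y = f' y) :=
    hconn.preconnected.apply_eq_of_forall_adj fun x y hxy => by
      obtain ⟨a, ha, hxa, hya⟩ := hapex x y x.2 y.2 hxy
      exact propext (eq_iff_eq_of_adj_of_adj f f' hxy hxa hya (hA ha))
  obtain ⟨v₀⟩ := hconn.nonempty
  by_cases h₀ : f v₀ = f' v₀
  · exact Or.inl fun v hv => (hinv v₀ ⟨v, hv⟩).mp h₀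
  · exact Or.inr fun v hv h => h₀ ((hinv v₀ ⟨v, hv⟩).mpr h)

theorem exists_forall_eq_of_forall_ne (hindep : ∀ a ∈ A, ∀ b ∈ A, ¬ F.Adj a b)
    (hnoiso : ∀ v, ∃ u, F.Adj v u) (hne : ∀ v ∉ A, f v ≠ f' v) : ∃ m, ∀ a ∈ A, f a = m := by
  have hinv : ∀ x y : ↥Aᶜ, -(f x + f' x) = -(f y + f' y) :=
    hconn.preconnected.apply_eq_of_forall_adj fun x y hxy => by
      obtain ⟨a, ha, hxa, hya⟩ := hapex x y x.2 y.2 hxy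
      rw [neg_add_eq_of_adj f f' hxa (hA ha) (hne x x.2),
        neg_add_eq_of_adj f f' hya (hA ha) (hne y y.2)]
  obtain ⟨v₀⟩ := hconn.nonempty
  refine ⟨-(f v₀ + f' v₀), fun a ha => ?_⟩
  obtain ⟨b, hab⟩ := hnoiso a
  have hb : b ∉ A := fun hb => hindep a ha b hb hab
  rw [← neg_add_eq_of_adj f f' hab.symm (hA ha) (hne b hb), hinv ⟨b, hb⟩ v₀]

theorem eq_of_eqOn (hindep : ∀ a ∈ A, ∀ b ∈ A, ¬ F.Adj a b) (hnoiso : ∀ v, ∃ u, F.Adj v u)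
    (htwo : ∃ a ∈ A, ∃ b ∈ A, f a ≠ f b) : f = f' := by
  rcases eqOn_compl_or_forall_ne hapex hconn hA with hAc | hne
  · exact RelHom.ext fun v => (em (v ∈ A)).elim (fun h => hA h) (fun h => hAc h)
  · obtain ⟨m, hm⟩ := exists_forall_eq_of_forall_ne hapex hconn hA hindep hnoiso hne
    obtain ⟨a, ha, b, hb, hab⟩ := htwo
    exact absurd ((hm a ha).trans (hm b hb).symm) hab

end SimpleGraph.Coloring

/-- Let `F` be a graph with a 3-coloring with classes `A`, `B`, `C`, without
isolated vertices, in which every edge lies in exactly one triangle and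
`F[B ∪ C]` is connected. Then any 3-coloring of `F` using at least two colors
on `A` is determined by its restriction to `A`. -/
theorem coloring_determined_by_restriction {V : Type*} (F : SimpleGraph V)
    (A B C : Set V) (hABC : IsColoring 3 F ![A, B, C])
    (hnoiso : ∀ v : V, ∃ u, F.Adj v u)
    (htri : ∀ u w : V, F.Adj u w → ∃! x, F.Adj u x ∧ F.Adj w x)
    (hconn : (F.induce (B ∪ C)).Connected)
    (c c' : Fin 3 → Set V)
    (hc : IsColoring 3 F c) (hc' : IsColoring 3 F c')
    (hres : ∀ i, c i ∩ A = c' i ∩ A)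
    (htwo : ∃ i j : Fin 3, i ≠ j ∧ (c i ∩ A).Nonempty ∧ (c j ∩ A).Nonempty) :
    ∀ i, c i = c' i := by
  have hapex : ∀ u w, u ∉ A → w ∉ A → F.Adj u w → ∃ a ∈ A, F.Adj u a ∧ F.Adj w a :=
    fun u w hu hw huw =>
      let ⟨x, ⟨hux, hwx⟩, _⟩ := htri u w huw
      ⟨x, hABC.mem_of_adj_of_adj (i := 0) hu hw huw hux hwx, hux, hwx⟩
  have hagree : Set.EqOn hc.toColoring hc'.toColoring A := fun a ha => by
    have ha' : a ∈ c' (hc.toColoring a) ∩ A := hres _ ▸ ⟨hc.mem_iff.mpr rfl, ha⟩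
    exact (hc'.mem_iff.mp ha'.1).symm
  have htwo' : ∃ a ∈ A, ∃ b ∈ A, hc.toColoring a ≠ hc.toColoring b := by
    obtain ⟨i, j, hij, ⟨a, hai, ha⟩, ⟨b, hbj, hb⟩⟩ := htwo
    exact ⟨a, ha, b, hb, by rwa [← hc.mem_iff.mp hai, ← hc.mem_iff.mp hbj] at hij⟩
  rw [hABC.union_eq_compl] at hconn
  exact congrFun (hc.eq_of_toColoring_eq hc'
    (Coloring.eq_of_eqOn hapex hconn hagree (hABC.2 0) hnoiso htwo'))
end
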